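/- For an integer n ≥ 3, Σ_{i=1}^{n−2} ζ(n−i, i) = ζ(n). -/

import Mathlib

open scoped BigOperators

/-- Riemann zeta as a real series: `ζ(p) = Σ_{n≥1} 1/n^p`. -/
noncomputable def rzeta (p : ℝ) : ℝ := ∑' n : ℕ, 1 / (n + 1 : ℝ) ^ p

/-- Double zeta value `ζ(a,b) = Σ_{m>n≥1} 1/(m^a n^b)`. -/
noncomputable def zeta2 (a b : ℝ) : ℝ :=
  ∑' q : {q : ℕ × ℕ // q.2 < q.1 ∧ 0 < q.2},
    1 / ((q.1.1 : ℝ) ^ a * (q.1.2 : ℝ) ^ b)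

/-- Triple zeta value `ζ(a,b,c) = Σ_{l>m>n≥1} 1/(l^a m^b n^c)`. -/
noncomputable def zeta3 (a b c : ℝ) : ℝ :=
  ∑' t : {t : ℕ × ℕ × ℕ // t.2.1 < t.1 ∧ t.2.2 < t.2.1 ∧ 0 < t.2.2},
    1 / ((t.1.1 : ℝ) ^ a * (t.1.2.1 : ℝ) ^ b * (t.1.2.2 : ℝ) ^ c)

/-- Tail of the zeta series: `ζ(p) − Σ_{i=1}^n 1/i^p`. -/
noncomputable def zetaTail (p : ℝ) (n : ℕ) : ℝ :=
  rzeta p - ∑ i ∈ Finset.range n, 1 / (i + 1 : ℝ) ^ p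

/-- Polylogarithm `Li_p(z) = Σ_{j≥1} z^j / j^p`. -/
noncomputable def polyLog (p : ℝ) (z : ℝ) : ℝ :=
  ∑' j : ℕ, z ^ (j + 1) / (j + 1 : ℝ) ^ p


/-!
For `m > k` write `m = k + d`. Summing a geometric progression,
`∑_{i=1}^{n-2} 1/(m^{n-i} k^i) = 1/(k^{n-2} m d) - 1/(m^{n-1} d)`.
With `k` fixed, `1/(m d) = (1/d - 1/(d+k))/k` telescopes over `d`, so the first term sums to
`∑_k H_k / k^{n-1}`; with `m` fixed, the second term sums over `d < m` to `∑_m H_{m-1} / m^{n-1}`.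
The difference is `∑_m (H_m - H_{m-1}) / m^{n-1} = ζ(n)`. All series converge absolutely because
`1/(k m d) ≤ (k d)^{-3/2}`, as `k d ≤ m²`.
-/

open Finset Filter Topology

theorem sum_Icc_one_div_pow_mul_pow {K : Type*} [Field K] {x y : K} (hx : x ≠ 0) (hy : y ≠ 0)
    (hxy : x - y ≠ 0) (n : ℕ) :
    ∑ i ∈ Icc 1 (n - 2), 1 / (x ^ (n - i) * y ^ i) =
      (1 / y ^ (n - 2) - 1 / x ^ (n - 2)) / (x * (x - y)) := by
  obtain hn | hn := lt_or_ge n 2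
  · simp [Nat.sub_eq_zero_of_le hn.le]
  obtain ⟨N, rfl⟩ := Nat.exists_eq_add_of_le' hn
  simp only [Nat.add_sub_cancel]
  clear hn
  induction N with
  | zero => simp
  | succ N ih =>
    have shift : ∀ i ∈ Icc 1 N,
        1 / (x ^ (N + 1 + 2 - i) * y ^ i) = 1 / x * (1 / (x ^ (N + 2 - i) * y ^ i)) := by
      intro i hi
      rw [show N + 1 + 2 - i = N + 2 - i + 1 by grind, pow_succ]
      field_simp
    rw [sum_Icc_succ_top (by omega), sum_congr rfl shift, ← mul_sum, ih,
      show N + 1 + 2 - (N + 1) = 2 by omega]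
    field_simp
    ring

theorem hasSum_sub_add_of_antitone {u : ℕ → ℝ} (hu : Antitone u) (hlim : Tendsto u atTop (𝓝 0))
    (k : ℕ) : HasSum (fun a => u a - u (a + k)) (∑ j ∈ range k, u j) := by
  rw [hasSum_iff_tendsto_nat_of_nonneg fun a => sub_nonneg.mpr (hu (Nat.le_add_right a k))]
  have partial_sum (N : ℕ) :
      ∑ a ∈ range N, (u a - u (a + k)) = ∑ j ∈ range k, u j - ∑ j ∈ range k, u (N + j) := by
    have h₁ := sum_range_add u N k
    have h₂ := sum_range_add u k N
    rw [add_comm k N] at h₂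
    simp only [sum_sub_distrib, add_comm _ k]
    linarith
  simp only [partial_sum]
  simpa using tendsto_const_nhds.sub
    (tendsto_finsetSum (range k) fun j _ => hlim.comp (tendsto_add_atTop_nat j))

theorem harmonic_cast_eq_sum (k : ℕ) : (harmonic k : ℝ) = ∑ i ∈ range k, 1 / ((i : ℝ) + 1) := by
  rw [harmonic]
  push_cast
  simp only [one_div]

theorem summable_one_div_mul_add_mul :
    Summable fun p : ℕ × ℕ => 1 / (((p.1 : ℝ) + 1) * ((p.1 : ℝ) + p.2 + 2) * ((p.2 : ℝ) + 1)) := by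
  have h : Summable fun j : ℕ => 1 / ((j : ℝ) + 1) ^ (3 / 2 : ℝ) := by
    simpa [abs_of_nonneg (by positivity : (0:ℝ) ≤ (_ : ℕ) + 1)] using
      (Real.summable_one_div_nat_add_rpow 1 (3 / 2)).mpr (by norm_num)
  refine (h.mul_of_nonneg h (fun _ => by positivity) fun _ => by positivity).of_nonneg_of_le
    (fun _ => by positivity) fun ⟨k, d⟩ => ?_
  set x : ℝ := (k : ℝ) + 1
  set y : ℝ := (d : ℝ) + 1
  have hx : 0 < x := by positivity
  have hy : 0 < y := by positivity
  have hsqrt : √(x * y) ≤ x + y := Real.sqrt_le_iff.mpr ⟨by positivity, by nlinarith⟩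
  rw [show (k : ℝ) + d + 2 = x + y by ring, one_div_mul_one_div, ← Real.mul_rpow hx.le hy.le]
  refine one_div_le_one_div_of_le (by positivity) ?_
  calc (x * y) ^ (3 / 2 : ℝ) = x * y * √(x * y) := by
        rw [show (3 / 2 : ℝ) = 1 + 1 / 2 by norm_num, Real.rpow_add (by positivity),
          Real.rpow_one, Real.sqrt_eq_rpow]
    _ ≤ x * y * (x + y) := by gcongr
    _ = x * (x + y) * y := by ring

namespace DoubleZeta

def indexEquiv : ℕ × ℕ ≃ {q : ℕ × ℕ // q.2 < q.1 ∧ 0 < q.2} where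
  toFun p := ⟨(p.1 + p.2 + 2, p.1 + 1), by omega, by omega⟩
  invFun q := (q.1.2 - 1, q.1.1 - q.1.2 - 1)
  left_inv p := by ext <;> simp only <;> omega
  right_inv := by
    rintro ⟨⟨m, k⟩, hkm, hk⟩
    ext <;> simp only <;> omega

/- A pair `p : ℕ × ℕ` stands for `k = p.1 + 1`, `d = p.2 + 1` and `m = k + d`. -/

noncomputable def zeta2Term (a b : ℕ) (p : ℕ × ℕ) : ℝ :=
  1 / (((p.1 : ℝ) + p.2 + 2) ^ a * ((p.1 : ℝ) + 1) ^ b)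

theorem zeta2_natCast (a b : ℕ) : zeta2 a b = ∑' p, zeta2Term a b p := by
  rw [zeta2, ← indexEquiv.tsum_eq]
  simp [indexEquiv, zeta2Term, Real.rpow_natCast]

noncomputable def kTerm (n : ℕ) (p : ℕ × ℕ) : ℝ :=
  1 / (((p.1 : ℝ) + 1) ^ (n - 2) * ((p.1 : ℝ) + p.2 + 2) * ((p.2 : ℝ) + 1))

noncomputable def mTerm (n : ℕ) (p : ℕ × ℕ) : ℝ :=
  1 / (((p.1 : ℝ) + p.2 + 2) ^ (n - 1) * ((p.2 : ℝ) + 1))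

theorem sum_zeta2Term {n : ℕ} (hn : 2 ≤ n) (p : ℕ × ℕ) :
    ∑ i ∈ Icc 1 (n - 2), zeta2Term (n - i) i p = kTerm n p - mTerm n p := by
  have hd : ((p.1 : ℝ) + p.2 + 2) - ((p.1 : ℝ) + 1) = (p.2 : ℝ) + 1 := by ring
  simp only [zeta2Term]
  rw [sum_Icc_one_div_pow_mul_pow (by positivity) (by positivity)
    (by rw [hd]; positivity), hd, kTerm, mTerm, show n - 1 = n - 2 + 1 by omega, pow_succ]
  field_simp

theorem mTerm_le_kTerm {n : ℕ} (hn : 2 ≤ n) (p : ℕ × ℕ) : mTerm n p ≤ kTerm n p := by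
  rw [mTerm, kTerm, show n - 1 = n - 2 + 1 by omega, pow_succ]
  gcongr
  · linarith [(p.2.cast_nonneg : (0 : ℝ) ≤ p.2)]
  · norm_num

theorem zeta2Term_le_kTerm {n i : ℕ} (hi : i ∈ Icc 1 (n - 2)) (p : ℕ × ℕ) :
    zeta2Term (n - i) i p ≤ kTerm n p := by
  have hn : 2 ≤ n := by grind
  calc zeta2Term (n - i) i p ≤ ∑ i ∈ Icc 1 (n - 2), zeta2Term (n - i) i p :=
        single_le_sum (f := fun i => zeta2Term (n - i) i p)
          (fun _ _ => by rw [zeta2Term]; positivity) hi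
    _ = kTerm n p - mTerm n p := sum_zeta2Term hn p
    _ ≤ kTerm n p := sub_le_self _ (by rw [mTerm]; positivity)

theorem summable_kTerm {n : ℕ} (hn : 3 ≤ n) : Summable (kTerm n) := by
  refine summable_one_div_mul_add_mul.of_nonneg_of_le (fun p => by rw [kTerm]; positivity)
    fun p => ?_
  rw [kTerm]
  gcongr
  exact le_self_pow₀ (by linarith [(p.1.cast_nonneg : (0 : ℝ) ≤ p.1)]) (by omega)

theorem summable_zeta2Term {n i : ℕ} (hi : i ∈ Icc 1 (n - 2)) : Summable (zeta2Term (n - i) i) :=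
  (summable_kTerm (by grind)).of_nonneg_of_le (fun p => by rw [zeta2Term]; positivity)
    (zeta2Term_le_kTerm hi)

theorem summable_mTerm {n : ℕ} (hn : 3 ≤ n) : Summable (mTerm n) :=
  (summable_kTerm hn).of_nonneg_of_le (fun p => by rw [mTerm]; positivity)
    (mTerm_le_kTerm (by omega))

theorem hasSum_kTerm_fiber {n : ℕ} (hn : 2 ≤ n) (j : ℕ) :
    HasSum (fun a => kTerm n (j, a)) ((harmonic (j + 1) : ℝ) / ((j : ℝ) + 1) ^ (n - 1)) := by
  have h := (hasSum_sub_add_of_antitone (u := fun a : ℕ => 1 / ((a : ℝ) + 1))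
    (fun a b hab => one_div_le_one_div_of_le (by positivity) (by gcongr))
    tendsto_one_div_add_atTop_nhds_zero_nat (j + 1)).mul_left (1 / ((j : ℝ) + 1) ^ (n - 1))
  rw [← harmonic_cast_eq_sum, mul_comm, ← div_eq_mul_one_div] at h
  refine h.congr_fun fun a => ?_
  rw [kTerm, show n - 1 = n - 2 + 1 by omega, pow_succ]
  push_cast
  field_simp
  ring

theorem hasSum_harmonic_of_hasSum_kTerm {n : ℕ} (hn : 2 ≤ n) {a : ℝ} (h : HasSum (kTerm n) a) :
    HasSum (fun j : ℕ => (harmonic (j + 1) : ℝ) / ((j : ℝ) + 1) ^ (n - 1)) a :=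
  h.prod_fiberwise (hasSum_kTerm_fiber hn)

theorem hasSum_mTerm_fiber (n s : ℕ) :
    HasSum (fun p : antidiagonal s => mTerm n p)
      ((harmonic (s + 1) : ℝ) / ((s : ℝ) + 2) ^ (n - 1)) := by
  convert hasSum_fintype _
  rw [sum_coe_sort]
  calc (harmonic (s + 1) : ℝ) / ((s : ℝ) + 2) ^ (n - 1)
      = ∑ i ∈ range (s + 1), 1 / (((s : ℝ) + 2) ^ (n - 1) * ((i : ℝ) + 1)) := by
        rw [harmonic_cast_eq_sum, sum_div]
        exact sum_congr rfl fun i _ => by rw [div_div, mul_comm]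
    _ = ∑ p ∈ antidiagonal s, mTerm n p.swap := by
        rw [Nat.sum_antidiagonal_eq_sum_range_succ_mk]
        refine sum_congr rfl fun i hi => ?_
        rw [mTerm, Prod.swap_prod_mk, Nat.cast_sub (by simpa [Nat.lt_succ_iff] using hi)]
        ring_nf
    _ = ∑ p ∈ antidiagonal s, mTerm n p := Nat.sum_antidiagonal_swap

theorem hasSum_harmonic_of_hasSum_mTerm {n : ℕ} {b : ℝ} (h : HasSum (mTerm n) b) :
    HasSum (fun j : ℕ => (harmonic j : ℝ) / ((j : ℝ) + 1) ^ (n - 1)) b := by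
  have hs := (HasAntidiagonal.sigmaAntidiagonalEquivProd.hasSum_iff.mpr h).sigma
    (hasSum_mTerm_fiber n)
  -- the reindexing `j = s + 1` loses only the term `j = 0`, which vanishes as `H_0 = 0`
  rw [← hasSum_nat_add_iff' 1]
  simpa [add_assoc, one_add_one_eq_two] using hs

theorem rzeta_eq_tsum_kTerm_sub_tsum_mTerm {n : ℕ} (hn : 3 ≤ n) :
    rzeta n = ∑' p, kTerm n p - ∑' p, mTerm n p := by
  have hA := hasSum_harmonic_of_hasSum_kTerm (by omega) (summable_kTerm hn).hasSum
  have hB := hasSum_harmonic_of_hasSum_mTerm (summable_mTerm hn).hasSum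
  refine ((hA.sub hB).congr_fun fun j => ?_).tsum_eq
  rw [Real.rpow_natCast, harmonic_succ, ← sub_div, show n = n - 1 + 1 by omega, pow_succ]
  push_cast
  field_simp
  ring

end DoubleZeta

open DoubleZeta

theorem stmt8 (n : ℕ) (hn : 3 ≤ n) :
    ∑ i ∈ Finset.Icc 1 (n - 2), zeta2 ((n - i : ℕ) : ℝ) (i : ℝ) = rzeta n := by
  calc ∑ i ∈ Icc 1 (n - 2), zeta2 ((n - i : ℕ) : ℝ) (i : ℝ)
      = ∑' p, ∑ i ∈ Icc 1 (n - 2), zeta2Term (n - i) i p := by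
        simp only [zeta2_natCast]
        exact (Summable.tsum_finsetSum fun i hi => summable_zeta2Term hi).symm
    _ = ∑' p, (kTerm n p - mTerm n p) := tsum_congr (sum_zeta2Term (by omega))
    _ = ∑' p, kTerm n p - ∑' p, mTerm n p := (summable_kTerm hn).tsum_sub (summable_mTerm hn)
    _ = rzeta n := (rzeta_eq_tsum_kTerm_sub_tsum_mTerm hn).symm
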